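/- Let (X, μ, ν, ∗, ◇) be an M-complete non-Archimedean intuitionistic fuzzy metric space, let ψ ∈ Ψ and φ ∈ Φ, and let f : X → X be an intuitionistic fuzzy ψ-φ-contractive mapping. Then for every x ∈ X, the orbit sequence x_n = f^n(x) converges to some point y ∈ X with f(y) = y. -/
import Mathlib


open Set Filter Topology

/-- An intuitionistic fuzzy metric space `(X, μ, ν, ∗, ◇)`. -/
structure IFMS (X : Type*) where
  mu : X → X → ℝ → ℝ
  nu : X → X → ℝ → ℝ
  tnorm : ℝ → ℝ → ℝ
  tconorm : ℝ → ℝ → ℝ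
  tnorm_mem : ∀ a ∈ Icc (0:ℝ) 1, ∀ b ∈ Icc (0:ℝ) 1, tnorm a b ∈ Icc (0:ℝ) 1
  tnorm_comm : ∀ a b, tnorm a b = tnorm b a
  tnorm_assoc : ∀ a b c, tnorm (tnorm a b) c = tnorm a (tnorm b c)
  tnorm_cont : ContinuousOn (fun p : ℝ × ℝ => tnorm p.1 p.2) (Icc (0:ℝ) 1 ×ˢ Icc (0:ℝ) 1)
  tnorm_one : ∀ a ∈ Icc (0:ℝ) 1, tnorm a 1 = a
  tnorm_mono : ∀ a ∈ Icc (0:ℝ) 1, ∀ b ∈ Icc (0:ℝ) 1, ∀ c ∈ Icc (0:ℝ) 1, ∀ d ∈ Icc (0:ℝ) 1,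
    a ≤ c → b ≤ d → tnorm a b ≤ tnorm c d
  tconorm_mem : ∀ a ∈ Icc (0:ℝ) 1, ∀ b ∈ Icc (0:ℝ) 1, tconorm a b ∈ Icc (0:ℝ) 1
  tconorm_comm : ∀ a b, tconorm a b = tconorm b a
  tconorm_assoc : ∀ a b c, tconorm (tconorm a b) c = tconorm a (tconorm b c)
  tconorm_cont : ContinuousOn (fun p : ℝ × ℝ => tconorm p.1 p.2) (Icc (0:ℝ) 1 ×ˢ Icc (0:ℝ) 1)
  tconorm_zero : ∀ a ∈ Icc (0:ℝ) 1, tconorm a 0 = a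
  tconorm_mono : ∀ a ∈ Icc (0:ℝ) 1, ∀ b ∈ Icc (0:ℝ) 1, ∀ c ∈ Icc (0:ℝ) 1, ∀ d ∈ Icc (0:ℝ) 1,
    a ≤ c → b ≤ d → tconorm a b ≤ tconorm c d
  mu_mem : ∀ x y : X, ∀ t > (0:ℝ), mu x y t ∈ Icc (0:ℝ) 1
  nu_mem : ∀ x y : X, ∀ t > (0:ℝ), nu x y t ∈ Icc (0:ℝ) 1
  sum_le_one : ∀ x y : X, ∀ t > (0:ℝ), mu x y t + nu x y t ≤ 1
  mu_pos : ∀ x y : X, ∀ t > (0:ℝ), 0 < mu x y t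
  mu_eq_one_iff : ∀ x y : X, ∀ t > (0:ℝ), (mu x y t = 1 ↔ x = y)
  mu_symm : ∀ x y : X, ∀ t > (0:ℝ), mu x y t = mu y x t
  mu_tri : ∀ x y z : X, ∀ t > (0:ℝ), ∀ s > (0:ℝ),
    tnorm (mu x y t) (mu y z s) ≤ mu x z (t + s)
  mu_cont : ∀ x y : X, ContinuousOn (fun t => mu x y t) (Ioi (0:ℝ))
  nu_lt_one : ∀ x y : X, ∀ t > (0:ℝ), nu x y t < 1
  nu_eq_zero_iff : ∀ x y : X, ∀ t > (0:ℝ), (nu x y t = 0 ↔ x = y)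
  nu_symm : ∀ x y : X, ∀ t > (0:ℝ), nu x y t = nu y x t
  nu_tri : ∀ x y z : X, ∀ t > (0:ℝ), ∀ s > (0:ℝ),
    nu x z (t + s) ≤ tconorm (nu x y t) (nu y z s)
  nu_cont : ∀ x y : X, ContinuousOn (fun t => nu x y t) (Ioi (0:ℝ))

/-- A non-Archimedean intuitionistic fuzzy metric space. -/
structure NAIFMS (X : Type*) extends IFMS X where
  mu_na : ∀ x y z : X, ∀ t > (0:ℝ), tnorm (mu x y t) (mu y z t) ≤ mu x z t
  nu_na : ∀ x y z : X, ∀ t > (0:ℝ), nu x z t ≤ tconorm (nu x y t) (nu y z t)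

/-- `ψ ∈ Ψ`: continuous, non-decreasing self-map of `[0,1]` with `ψ(t) < t` on `(0,1)`. -/
def MemPsi (ψ : ℝ → ℝ) : Prop :=
  ContinuousOn ψ (Icc (0:ℝ) 1) ∧
  (∀ a ∈ Icc (0:ℝ) 1, ψ a ∈ Icc (0:ℝ) 1) ∧
  (∀ a ∈ Icc (0:ℝ) 1, ∀ b ∈ Icc (0:ℝ) 1, a ≤ b → ψ a ≤ ψ b) ∧
  (∀ a ∈ Ioo (0:ℝ) 1, ψ a < a)

/-- `φ ∈ Φ`: continuous, non-decreasing self-map of `[0,1]` with `φ(t) > t` on `(0,1)`. -/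
def MemPhi (φ : ℝ → ℝ) : Prop :=
  ContinuousOn φ (Icc (0:ℝ) 1) ∧
  (∀ a ∈ Icc (0:ℝ) 1, φ a ∈ Icc (0:ℝ) 1) ∧
  (∀ a ∈ Icc (0:ℝ) 1, ∀ b ∈ Icc (0:ℝ) 1, a ≤ b → φ a ≤ φ b) ∧
  (∀ a ∈ Ioo (0:ℝ) 1, a < φ a)

/-- `f` is an intuitionistic fuzzy `ψ`-`φ`-contractive mapping. -/
def IsPsiPhiContractive {X : Type*} (S : IFMS X) (ψ φ : ℝ → ℝ) (f : X → X) : Prop :=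
  ∀ x y : X, ∀ t > (0:ℝ),
    (0 < S.mu x y t → S.mu x y t ≤ ψ (S.mu (f x) (f y) t)) ∧
    (S.nu x y t < 1 → φ (S.nu (f x) (f y) t) ≤ S.nu x y t)

/-- Convergence of a sequence in an intuitionistic fuzzy metric space. -/
def ConvergesTo {X : Type*} (S : IFMS X) (x : ℕ → X) (y : X) : Prop :=
  ∀ t > (0:ℝ),
    Tendsto (fun n => S.mu (x n) y t) atTop (𝓝 1) ∧
    Tendsto (fun n => S.nu (x n) y t) atTop (𝓝 0)

/-- M-Cauchy sequence. -/
def MCauchy {X : Type*} (S : IFMS X) (x : ℕ → X) : Prop :=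
  ∀ ε ∈ Ioo (0:ℝ) 1, ∀ t > (0:ℝ), ∃ n₀ : ℕ, ∀ m n : ℕ, n₀ ≤ m → n₀ ≤ n →
    1 - ε < S.mu (x n) (x m) t ∧ S.nu (x n) (x m) t < ε

/-- M-completeness: every M-Cauchy sequence converges to some point of `X`. -/
def MComplete {X : Type*} (S : IFMS X) : Prop :=
  ∀ x : ℕ → X, MCauchy S x → ∃ y : X, ConvergesTo S x y

/-- Compactness: every sequence has a subsequence converging to some point of `X`. -/
def SeqCompact {X : Type*} (S : IFMS X) : Prop :=
  ∀ x : ℕ → X, ∃ g : ℕ → ℕ, StrictMono g ∧ ∃ y : X, ConvergesTo S (x ∘ g) y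

section Helpers
variable {X : Type*}

lemma psi_le {ψ : ℝ → ℝ} (hψ : MemPsi ψ) : ∀ a ∈ Icc (0:ℝ) 1, ψ a ≤ a := by
  obtain ⟨hc, hmem, hmono, hlt⟩ := hψ
  intro a ha
  rcases eq_or_lt_of_le ha.1 with h0 | h0
  · -- a = 0
    subst h0
    by_contra hp
    push_neg at hp
    have key : ∀ b ∈ Ioo (0:ℝ) 1, ψ 0 < b := by
      intro b hb
      exact lt_of_le_of_lt (hmono 0 ⟨le_refl 0, zero_le_one⟩ b ⟨hb.1.le, hb.2.le⟩ hb.1.le) (hlt b hb)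
    have h1 : ψ 0 < min (ψ 0) 1 / 2 := key _ ⟨by positivity, by
      have := min_le_right (ψ 0) 1; linarith⟩
    have h2 : min (ψ 0) 1 / 2 ≤ ψ 0 / 2 := by
      have := min_le_left (ψ 0) 1; linarith
    linarith
  rcases eq_or_lt_of_le ha.2 with h1 | h1
  · rw [h1]; exact (hmem 1 (by norm_num)).2
  · exact (hlt a ⟨h0, h1⟩).le

lemma phi_ge {φ : ℝ → ℝ} (hφ : MemPhi φ) : ∀ a ∈ Icc (0:ℝ) 1, a ≤ φ a := by
  obtain ⟨hc, hmem, hmono, hlt⟩ := hφ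
  intro a ha
  rcases eq_or_lt_of_le ha.1 with h0 | h0
  · rw [← h0]; exact (hmem 0 (by norm_num)).1
  rcases eq_or_lt_of_le ha.2 with h1 | h1
  · -- a = 1
    subst h1
    by_contra hp
    push_neg at hp
    have key : ∀ b ∈ Ioo (0:ℝ) 1, b < φ 1 := by
      intro b hb
      exact lt_of_lt_of_le (hlt b hb) (hmono b ⟨hb.1.le, hb.2.le⟩ 1 ⟨zero_le_one, le_refl 1⟩ hb.2.le)
    have hφ1 : 0 ≤ φ 1 := (hmem 1 (by norm_num)).1
    have h2 : (φ 1 + 1) / 2 < φ 1 := key _ ⟨by linarith, by linarith⟩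
    linarith
  · exact (hlt a ⟨h0, h1⟩).le

lemma cont_tendsto {g : ℝ → ℝ} (hg : ContinuousOn g (Icc (0:ℝ) 1)) {u : ℕ → ℝ} {a : ℝ}
    (hu : ∀ n, u n ∈ Icc (0:ℝ) 1) (ha : a ∈ Icc (0:ℝ) 1) (hua : Tendsto u atTop (𝓝 a)) :
    Tendsto (fun n => g (u n)) atTop (𝓝 (g a)) := by
  have h1 : Tendsto u atTop (𝓝[Icc (0:ℝ) 1] a) :=
    tendsto_nhdsWithin_of_tendsto_nhds_of_eventually_within _ hua (Eventually.of_forall hu)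
  exact ((hg a ha).tendsto).comp h1

lemma tnorm_tendsto (S : IFMS X) {u v : ℕ → ℝ} {a b : ℝ}
    (hu : ∀ n, u n ∈ Icc (0:ℝ) 1) (hv : ∀ n, v n ∈ Icc (0:ℝ) 1)
    (ha : a ∈ Icc (0:ℝ) 1) (hb : b ∈ Icc (0:ℝ) 1)
    (hua : Tendsto u atTop (𝓝 a)) (hvb : Tendsto v atTop (𝓝 b)) :
    Tendsto (fun n => S.tnorm (u n) (v n)) atTop (𝓝 (S.tnorm a b)) := by
  have h1 : Tendsto (fun n => (u n, v n)) atTop (𝓝[Icc (0:ℝ) 1 ×ˢ Icc (0:ℝ) 1] (a, b)) :=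
    tendsto_nhdsWithin_of_tendsto_nhds_of_eventually_within _ (hua.prodMk_nhds hvb)
      (Eventually.of_forall fun n => ⟨hu n, hv n⟩)
  exact ((S.tnorm_cont (a, b) ⟨ha, hb⟩).tendsto).comp h1

lemma tconorm_tendsto (S : IFMS X) {u v : ℕ → ℝ} {a b : ℝ}
    (hu : ∀ n, u n ∈ Icc (0:ℝ) 1) (hv : ∀ n, v n ∈ Icc (0:ℝ) 1)
    (ha : a ∈ Icc (0:ℝ) 1) (hb : b ∈ Icc (0:ℝ) 1)
    (hua : Tendsto u atTop (𝓝 a)) (hvb : Tendsto v atTop (𝓝 b)) :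
    Tendsto (fun n => S.tconorm (u n) (v n)) atTop (𝓝 (S.tconorm a b)) := by
  have h1 : Tendsto (fun n => (u n, v n)) atTop (𝓝[Icc (0:ℝ) 1 ×ˢ Icc (0:ℝ) 1] (a, b)) :=
    tendsto_nhdsWithin_of_tendsto_nhds_of_eventually_within _ (hua.prodMk_nhds hvb)
      (Eventually.of_forall fun n => ⟨hu n, hv n⟩)
  exact ((S.tconorm_cont (a, b) ⟨ha, hb⟩).tendsto).comp h1

/-- Key abstract lemma: `a n ≤ ψ (a (n+1))`, `0 < a 0` forces `a → 1`. -/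
lemma tendsto_one_of_psi {ψ : ℝ → ℝ} (hψ : MemPsi ψ) {a : ℕ → ℝ}
    (hmem : ∀ n, a n ∈ Icc (0:ℝ) 1) (hstep : ∀ n, a n ≤ ψ (a (n + 1)))
    (h0 : 0 < a 0) : Tendsto a atTop (𝓝 1) := by
  have hmono : Monotone a := monotone_nat_of_le_succ fun n =>
    (hstep n).trans (psi_le hψ _ (hmem (n + 1)))
  have hbdd : BddAbove (range a) := ⟨1, by rintro _ ⟨n, rfl⟩; exact (hmem n).2⟩
  set L := ⨆ n, a n with hL
  have hten : Tendsto a atTop (𝓝 L) := tendsto_atTop_ciSup hmono hbdd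
  have hL1 : L ≤ 1 := ciSup_le fun n => (hmem n).2
  have hL0 : 0 < L := lt_of_lt_of_le h0 (le_ciSup hbdd 0)
  have hLm : L ∈ Icc (0:ℝ) 1 := ⟨hL0.le, hL1⟩
  have hLeq : L = 1 := by
    by_contra hne
    have hLlt : L < 1 := lt_of_le_of_ne hL1 hne
    have h2 : Tendsto (fun n => ψ (a (n + 1))) atTop (𝓝 (ψ L)) :=
      cont_tendsto hψ.1 (fun n => hmem (n + 1)) hLm (hten.comp (tendsto_add_atTop_nat 1))
    have h3 : L ≤ ψ L := le_of_tendsto_of_tendsto' hten h2 hstep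
    exact absurd h3 (not_le.mpr (hψ.2.2.2 L ⟨hL0, hLlt⟩))
  rwa [hLeq] at hten

/-- Key abstract lemma: `φ (a (n+1)) ≤ a n`, `a 0 < 1` forces `a → 0`. -/
lemma tendsto_zero_of_phi {φ : ℝ → ℝ} (hφ : MemPhi φ) {a : ℕ → ℝ}
    (hmem : ∀ n, a n ∈ Icc (0:ℝ) 1) (hstep : ∀ n, φ (a (n + 1)) ≤ a n)
    (h0 : a 0 < 1) : Tendsto a atTop (𝓝 0) := by
  have hanti : Antitone a := antitone_nat_of_succ_le fun n =>
    (phi_ge hφ _ (hmem (n + 1))).trans (hstep n)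
  have hbdd : BddBelow (range a) := ⟨0, by rintro _ ⟨n, rfl⟩; exact (hmem n).1⟩
  set L := ⨅ n, a n with hL
  have hten : Tendsto a atTop (𝓝 L) := tendsto_atTop_ciInf hanti hbdd
  have hL0 : 0 ≤ L := le_ciInf fun n => (hmem n).1
  have hL1 : L < 1 := lt_of_le_of_lt (ciInf_le hbdd 0) h0
  have hLm : L ∈ Icc (0:ℝ) 1 := ⟨hL0, hL1.le⟩
  have hLeq : L = 0 := by
    by_contra hne
    have hLpos : 0 < L := lt_of_le_of_ne hL0 (Ne.symm hne)
    have h2 : Tendsto (fun n => φ (a (n + 1))) atTop (𝓝 (φ L)) :=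
      cont_tendsto hφ.1 (fun n => hmem (n + 1)) hLm (hten.comp (tendsto_add_atTop_nat 1))
    have h3 : φ L ≤ L := le_of_tendsto_of_tendsto' h2 hten hstep
    exact absurd h3 (not_le.mpr (hφ.2.2.2 L ⟨hLpos, hL1⟩))
  rwa [hLeq] at hten

end Helpers
section Steps
variable {X : Type*}

lemma step_mu (S : NAIFMS X) {ψ φ : ℝ → ℝ} (hψ : MemPsi ψ) {f : X → X}
    (hf : IsPsiPhiContractive S.toIFMS ψ φ f) (x₀ : X) {t : ℝ} (ht : 0 < t) :
    Tendsto (fun n => S.mu (f^[n] x₀) (f^[n + 1] x₀) t) atTop (𝓝 1) := by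
  apply tendsto_one_of_psi hψ (fun n => S.mu_mem _ _ t ht)
  · intro n
    have h := (hf (f^[n] x₀) (f^[n + 1] x₀) t ht).1 (S.mu_pos _ _ t ht)
    rwa [← Function.iterate_succ_apply' f n x₀, ← Function.iterate_succ_apply' f (n + 1) x₀] at h
  · exact S.mu_pos _ _ t ht

lemma step_nu (S : NAIFMS X) {ψ φ : ℝ → ℝ} (hφ : MemPhi φ) {f : X → X}
    (hf : IsPsiPhiContractive S.toIFMS ψ φ f) (x₀ : X) {t : ℝ} (ht : 0 < t) :
    Tendsto (fun n => S.nu (f^[n] x₀) (f^[n + 1] x₀) t) atTop (𝓝 0) := by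
  apply tendsto_zero_of_phi hφ (fun n => S.nu_mem _ _ t ht)
  · intro n
    have h := (hf (f^[n] x₀) (f^[n + 1] x₀) t ht).2 (S.nu_lt_one _ _ t ht)
    rwa [← Function.iterate_succ_apply' f n x₀, ← Function.iterate_succ_apply' f (n + 1) x₀] at h
  · exact S.nu_lt_one _ _ t ht

end Steps
section Cauchy
variable {X : Type*}

lemma cauchy_mu (S : NAIFMS X) {ψ φ : ℝ → ℝ} (hψ : MemPsi ψ) {f : X → X}
    (hf : IsPsiPhiContractive S.toIFMS ψ φ f) (x₀ : X) {ε t : ℝ}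
    (hε : ε ∈ Ioo (0:ℝ) 1) (ht : 0 < t) :
    ∃ n₀ : ℕ, ∀ m n : ℕ, n₀ ≤ m → n₀ ≤ n →
      1 - ε < S.mu (f^[n] x₀) (f^[m] x₀) t := by
  classical
  set x : ℕ → X := fun n => f^[n] x₀ with hxdef
  by_contra hcon
  push_neg at hcon
  have hem : (1 - ε) ∈ Icc (0:ℝ) 1 := ⟨by linarith [hε.2], by linarith [hε.1]⟩
  -- ordered bad pairs
  have hbad : ∀ N : ℕ, ∃ q, N ≤ q ∧ ∃ k, q < k ∧ S.mu (x q) (x k) t ≤ 1 - ε := by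
    intro N
    obtain ⟨m, n, hm, hn, hle⟩ := hcon N
    have hne : n ≠ m := by
      rintro rfl
      rw [(S.mu_eq_one_iff (x n) (x n) t ht).mpr rfl] at hle
      linarith [hε.1]
    rcases lt_or_gt_of_ne hne with h | h
    · exact ⟨n, hn, m, h, hle⟩
    · exact ⟨m, hm, n, h, by rwa [S.mu_symm _ _ t ht]⟩
  choose p hpN hbad2 using hbad
  have hex : ∀ N, ∃ k, p N < k ∧ S.mu (x (p N)) (x k) t ≤ 1 - ε := hbad2
  set m : ℕ → ℕ := fun N => Nat.find (hex N) with hmdef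
  have hm1 : ∀ N, p N < m N ∧ S.mu (x (p N)) (x (m N)) t ≤ 1 - ε := fun N => Nat.find_spec (hex N)
  have hmin : ∀ N k, k < m N → ¬(p N < k ∧ S.mu (x (p N)) (x k) t ≤ 1 - ε) :=
    fun N k hk => Nat.find_min (hex N) hk
  have hprev : ∀ N, 1 - ε < S.mu (x (p N)) (x (m N - 1)) t := by
    intro N
    rcases eq_or_lt_of_le (Nat.succ_le_of_lt (hm1 N).1) with heq | hlt
    · have he : m N - 1 = p N := by omega
      rw [he, (S.mu_eq_one_iff _ _ t ht).mpr rfl]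
      linarith [hε.1]
    · have h1 : m N - 1 < m N := by omega
      have h2 := hmin N (m N - 1) h1
      push_neg at h2
      exact h2 (by omega)
  set μstep : ℕ → ℝ := fun k => S.mu (x k) (x (k + 1)) t with hμdef
  have hμmem : ∀ k, μstep k ∈ Icc (0:ℝ) 1 := fun k => S.mu_mem _ _ t ht
  have hslim : Tendsto μstep atTop (𝓝 1) := step_mu S hψ hf x₀ ht
  set c : ℕ → ℝ := fun N => S.mu (x (p N)) (x (m N)) t with hcdef
  set d : ℕ → ℝ := fun N => S.mu (x (p N + 1)) (x (m N + 1)) t with hddef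
  have hcmem : ∀ N, c N ∈ Icc (0:ℝ) 1 := fun N => S.mu_mem _ _ t ht
  have hdmem : ∀ N, d N ∈ Icc (0:ℝ) 1 := fun N => S.mu_mem _ _ t ht
  have hcle : ∀ N, c N ≤ 1 - ε := fun N => (hm1 N).2
  -- lower bound for c
  have hclow : ∀ N, S.tnorm (1 - ε) (μstep (m N - 1)) ≤ c N := by
    intro N
    have h0 := (hm1 N).1
    have hmge : m N - 1 + 1 = m N := by omega
    have htri := S.mu_na (x (p N)) (x (m N - 1)) (x (m N)) t ht
    have h2 : S.tnorm (1 - ε) (μstep (m N - 1)) ≤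
        S.tnorm (S.mu (x (p N)) (x (m N - 1)) t) (S.mu (x (m N - 1)) (x (m N)) t) := by
      have : S.mu (x (m N - 1)) (x (m N)) t = μstep (m N - 1) := by
        simp only [hμdef, hmge]
      rw [this]
      exact S.tnorm_mono _ hem _ (hμmem _) _ (S.mu_mem _ _ t ht) _ (hμmem _)
        (hprev N).le le_rfl
    exact h2.trans htri
  -- limits
  have hmN : ∀ N, N ≤ m N - 1 := fun N => by have := (hm1 N).1; have := hpN N; omega
  have hmlim : Tendsto (fun N => μstep (m N - 1)) atTop (𝓝 1) :=
    hslim.comp (tendsto_atTop_mono hmN tendsto_id)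
  have hlowlim : Tendsto (fun N => S.tnorm (1 - ε) (μstep (m N - 1))) atTop (𝓝 (1 - ε)) := by
    have := tnorm_tendsto S.toIFMS (u := fun _ => 1 - ε) (v := fun N => μstep (m N - 1))
      (fun _ => hem) (fun N => hμmem _) hem ⟨zero_le_one, le_rfl⟩ tendsto_const_nhds hmlim
    rwa [S.tnorm_one _ hem] at this
  have hclim : Tendsto c atTop (𝓝 (1 - ε)) :=
    tendsto_of_tendsto_of_tendsto_of_le_of_le hlowlim tendsto_const_nhds hclow hcle
  -- contraction
  have hfx : ∀ k, f (x k) = x (k + 1) := fun k => (Function.iterate_succ_apply' f k x₀).symm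
  have hcd : ∀ N, c N ≤ ψ (d N) := by
    intro N
    have h := (hf (x (p N)) (x (m N)) t ht).1 (S.mu_pos _ _ t ht)
    rwa [hfx, hfx] at h
  -- double triangle
  have hddc : ∀ N, S.tnorm (μstep (p N)) (S.tnorm (d N) (μstep (m N))) ≤ c N := by
    intro N
    have h1 := S.mu_na (x (p N)) (x (p N + 1)) (x (m N)) t ht
    have h2 := S.mu_na (x (p N + 1)) (x (m N + 1)) (x (m N)) t ht
    have h3 : S.mu (x (m N + 1)) (x (m N)) t = μstep (m N) := S.mu_symm _ _ t ht
    rw [h3] at h2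
    have h4 : S.tnorm (μstep (p N)) (S.tnorm (d N) (μstep (m N))) ≤
        S.tnorm (μstep (p N)) (S.mu (x (p N + 1)) (x (m N)) t) :=
      S.tnorm_mono _ (hμmem _) _
        (S.tnorm_mem _ (hdmem N) _ (hμmem _)) _ (hμmem _) _ (S.mu_mem _ _ t ht)
        le_rfl h2
    exact h4.trans h1
  -- Bolzano–Weierstrass
  obtain ⟨dl, hdl, g, hg, hdg⟩ := (isCompact_Icc (a := (0:ℝ)) (b := 1)).tendsto_subseq hdmem
  have hgtop : Tendsto g atTop atTop := hg.tendsto_atTop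
  have hcg : Tendsto (fun j => c (g j)) atTop (𝓝 (1 - ε)) := hclim.comp hgtop
  have hψd : Tendsto (fun j => ψ (d (g j))) atTop (𝓝 (ψ dl)) :=
    cont_tendsto hψ.1 (fun j => hdmem (g j)) hdl hdg
  have h1e : 1 - ε ≤ ψ dl := le_of_tendsto_of_tendsto' hcg hψd fun j => hcd (g j)
  -- limit of lhs of hddc along g
  have hplim : Tendsto (fun j => μstep (p (g j))) atTop (𝓝 1) :=
    hslim.comp ((tendsto_atTop_mono hpN tendsto_id).comp hgtop)
  have hmN2 : ∀ N, N ≤ m N := fun N => by have := (hm1 N).1; have := hpN N; omega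
  have hmlim2 : Tendsto (fun j => μstep (m (g j))) atTop (𝓝 1) :=
    hslim.comp ((tendsto_atTop_mono hmN2 tendsto_id).comp hgtop)
  have hinlim : Tendsto (fun j => S.tnorm (d (g j)) (μstep (m (g j)))) atTop
      (𝓝 (S.tnorm dl 1)) :=
    tnorm_tendsto S.toIFMS (fun j => hdmem (g j)) (fun j => hμmem _) hdl
      ⟨zero_le_one, le_rfl⟩ hdg hmlim2
  rw [S.tnorm_one _ hdl] at hinlim
  have hlhslim : Tendsto (fun j => S.tnorm (μstep (p (g j))) (S.tnorm (d (g j)) (μstep (m (g j)))))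
      atTop (𝓝 (S.tnorm 1 dl)) :=
    tnorm_tendsto S.toIFMS (fun j => hμmem _)
      (fun j => S.tnorm_mem _ (hdmem (g j)) _ (hμmem _)) ⟨zero_le_one, le_rfl⟩ hdl
      hplim hinlim
  rw [S.tnorm_comm, S.tnorm_one _ hdl] at hlhslim
  have hdle : dl ≤ 1 - ε := le_of_tendsto_of_tendsto' hlhslim hcg fun j => hddc (g j)
  have hf1 : ψ dl ≤ ψ (1 - ε) := hψ.2.2.1 dl hdl (1 - ε) hem hdle
  have hf2 : ψ (1 - ε) < 1 - ε := hψ.2.2.2 (1 - ε) ⟨by linarith [hε.2], by linarith [hε.1]⟩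
  linarith
end Cauchy
section CauchyNu
variable {X : Type*}

lemma cauchy_nu (S : NAIFMS X) {ψ φ : ℝ → ℝ} (hφ : MemPhi φ) {f : X → X}
    (hf : IsPsiPhiContractive S.toIFMS ψ φ f) (x₀ : X) {ε t : ℝ}
    (hε : ε ∈ Ioo (0:ℝ) 1) (ht : 0 < t) :
    ∃ n₀ : ℕ, ∀ m n : ℕ, n₀ ≤ m → n₀ ≤ n →
      S.nu (f^[n] x₀) (f^[m] x₀) t < ε := by
  classical
  set x : ℕ → X := fun n => f^[n] x₀ with hxdef
  by_contra hcon
  push_neg at hcon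
  have hem : ε ∈ Icc (0:ℝ) 1 := ⟨hε.1.le, hε.2.le⟩
  have h01 : (0:ℝ) ∈ Icc (0:ℝ) 1 := ⟨le_rfl, zero_le_one⟩
  have hbad : ∀ N : ℕ, ∃ q, N ≤ q ∧ ∃ k, q < k ∧ ε ≤ S.nu (x q) (x k) t := by
    intro N
    obtain ⟨m, n, hm, hn, hle⟩ := hcon N
    have hne : n ≠ m := by
      rintro rfl
      rw [(S.nu_eq_zero_iff (x n) (x n) t ht).mpr rfl] at hle
      linarith [hε.1]
    rcases lt_or_gt_of_ne hne with h | h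
    · exact ⟨n, hn, m, h, hle⟩
    · exact ⟨m, hm, n, h, by rwa [S.nu_symm _ _ t ht]⟩
  choose p hpN hbad2 using hbad
  have hex : ∀ N, ∃ k, p N < k ∧ ε ≤ S.nu (x (p N)) (x k) t := hbad2
  set m : ℕ → ℕ := fun N => Nat.find (hex N) with hmdef
  have hm1 : ∀ N, p N < m N ∧ ε ≤ S.nu (x (p N)) (x (m N)) t := fun N => Nat.find_spec (hex N)
  have hmin : ∀ N k, k < m N → ¬(p N < k ∧ ε ≤ S.nu (x (p N)) (x k) t) :=
    fun N k hk => Nat.find_min (hex N) hk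
  have hprev : ∀ N, S.nu (x (p N)) (x (m N - 1)) t < ε := by
    intro N
    rcases eq_or_lt_of_le (Nat.succ_le_of_lt (hm1 N).1) with heq | hlt
    · have he : m N - 1 = p N := by omega
      rw [he, (S.nu_eq_zero_iff _ _ t ht).mpr rfl]
      exact hε.1
    · have h1 : m N - 1 < m N := by omega
      have h2 := hmin N (m N - 1) h1
      push_neg at h2
      exact h2 (by omega)
  set νstep : ℕ → ℝ := fun k => S.nu (x k) (x (k + 1)) t with hνdef
  have hνmem : ∀ k, νstep k ∈ Icc (0:ℝ) 1 := fun k => S.nu_mem _ _ t ht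
  have hslim : Tendsto νstep atTop (𝓝 0) := step_nu S hφ hf x₀ ht
  set c : ℕ → ℝ := fun N => S.nu (x (p N)) (x (m N)) t with hcdef
  set d : ℕ → ℝ := fun N => S.nu (x (p N + 1)) (x (m N + 1)) t with hddef
  have hcmem : ∀ N, c N ∈ Icc (0:ℝ) 1 := fun N => S.nu_mem _ _ t ht
  have hdmem : ∀ N, d N ∈ Icc (0:ℝ) 1 := fun N => S.nu_mem _ _ t ht
  have hcge : ∀ N, ε ≤ c N := fun N => (hm1 N).2
  -- upper bound for c
  have hchigh : ∀ N, c N ≤ S.tconorm ε (νstep (m N - 1)) := by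
    intro N
    have h0 := (hm1 N).1
    have hmge : m N - 1 + 1 = m N := by omega
    have htri := S.nu_tri (x (p N)) (x (m N - 1)) (x (m N)) t ht
    have h2 : S.tconorm (S.nu (x (p N)) (x (m N - 1)) t) (S.nu (x (m N - 1)) (x (m N)) t) ≤
        S.tconorm ε (νstep (m N - 1)) := by
      have he : S.nu (x (m N - 1)) (x (m N)) t = νstep (m N - 1) := by
        simp only [hνdef, hmge]
      rw [he]
      exact S.tconorm_mono _ (S.nu_mem _ _ t ht) _ (hνmem _) _ hem _ (hνmem _)
        (hprev N).le le_rfl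
    have hna := S.nu_na (x (p N)) (x (m N - 1)) (x (m N)) t ht
    exact hna.trans h2
  have hmN : ∀ N, N ≤ m N - 1 := fun N => by have := (hm1 N).1; have := hpN N; omega
  have hmlim : Tendsto (fun N => νstep (m N - 1)) atTop (𝓝 0) :=
    hslim.comp (tendsto_atTop_mono hmN tendsto_id)
  have hhighlim : Tendsto (fun N => S.tconorm ε (νstep (m N - 1))) atTop (𝓝 ε) := by
    have := tconorm_tendsto S.toIFMS (u := fun _ => ε) (v := fun N => νstep (m N - 1))
      (fun _ => hem) (fun N => hνmem _) hem h01 tendsto_const_nhds hmlim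
    rwa [S.tconorm_zero _ hem] at this
  have hclim : Tendsto c atTop (𝓝 ε) :=
    tendsto_of_tendsto_of_tendsto_of_le_of_le tendsto_const_nhds hhighlim hcge hchigh
  have hfx : ∀ k, f (x k) = x (k + 1) := fun k => (Function.iterate_succ_apply' f k x₀).symm
  have hcd : ∀ N, φ (d N) ≤ c N := by
    intro N
    have h := (hf (x (p N)) (x (m N)) t ht).2 (S.nu_lt_one _ _ t ht)
    rwa [hfx, hfx] at h
  -- double triangle
  have hddc : ∀ N, c N ≤ S.tconorm (νstep (p N)) (S.tconorm (d N) (νstep (m N))) := by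
    intro N
    have h1 := S.nu_na (x (p N)) (x (p N + 1)) (x (m N)) t ht
    have h2 := S.nu_na (x (p N + 1)) (x (m N + 1)) (x (m N)) t ht
    have h3 : S.nu (x (m N + 1)) (x (m N)) t = νstep (m N) := S.nu_symm _ _ t ht
    rw [h3] at h2
    have h4 : S.tconorm (νstep (p N)) (S.nu (x (p N + 1)) (x (m N)) t) ≤
        S.tconorm (νstep (p N)) (S.tconorm (d N) (νstep (m N))) :=
      S.tconorm_mono _ (hνmem _) _ (S.nu_mem _ _ t ht) _ (hνmem _) _
        (S.tconorm_mem _ (hdmem N) _ (hνmem _)) le_rfl h2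
    exact h1.trans h4
  obtain ⟨dl, hdl, g, hg, hdg⟩ := (isCompact_Icc (a := (0:ℝ)) (b := 1)).tendsto_subseq hdmem
  have hgtop : Tendsto g atTop atTop := hg.tendsto_atTop
  have hcg : Tendsto (fun j => c (g j)) atTop (𝓝 ε) := hclim.comp hgtop
  have hφd : Tendsto (fun j => φ (d (g j))) atTop (𝓝 (φ dl)) :=
    cont_tendsto hφ.1 (fun j => hdmem (g j)) hdl hdg
  have h1e : φ dl ≤ ε := le_of_tendsto_of_tendsto' hφd hcg fun j => hcd (g j)
  have hplim : Tendsto (fun j => νstep (p (g j))) atTop (𝓝 0) :=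
    hslim.comp ((tendsto_atTop_mono hpN tendsto_id).comp hgtop)
  have hmN2 : ∀ N, N ≤ m N := fun N => by have := (hm1 N).1; have := hpN N; omega
  have hmlim2 : Tendsto (fun j => νstep (m (g j))) atTop (𝓝 0) :=
    hslim.comp ((tendsto_atTop_mono hmN2 tendsto_id).comp hgtop)
  have hinlim : Tendsto (fun j => S.tconorm (d (g j)) (νstep (m (g j)))) atTop
      (𝓝 (S.tconorm dl 0)) :=
    tconorm_tendsto S.toIFMS (fun j => hdmem (g j)) (fun j => hνmem _) hdl h01 hdg hmlim2
  rw [S.tconorm_zero _ hdl] at hinlim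
  have hlhslim : Tendsto
      (fun j => S.tconorm (νstep (p (g j))) (S.tconorm (d (g j)) (νstep (m (g j)))))
      atTop (𝓝 (S.tconorm 0 dl)) :=
    tconorm_tendsto S.toIFMS (fun j => hνmem _)
      (fun j => S.tconorm_mem _ (hdmem (g j)) _ (hνmem _)) h01 hdl hplim hinlim
  rw [S.tconorm_comm, S.tconorm_zero _ hdl] at hlhslim
  have hdge : ε ≤ dl := le_of_tendsto_of_tendsto' hcg hlhslim fun j => hddc (g j)
  have hf1 : φ ε ≤ φ dl := hφ.2.2.1 ε hem dl hdl hdge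
  have hf2 : ε < φ ε := hφ.2.2.2 ε hε
  linarith
end CauchyNu
theorem ifms_orbit_converges_to_fixed_point {X : Type*} (S : NAIFMS X) (ψ φ : ℝ → ℝ)
    (hψ : MemPsi ψ) (hφ : MemPhi φ) (f : X → X)
    (hf : IsPsiPhiContractive S.toIFMS ψ φ f)
    (hcompl : MComplete S.toIFMS) :
    ∀ x : X, ∃ y : X, ConvergesTo S.toIFMS (fun n => f^[n] x) y ∧ f y = y := by
  intro x₀
  set x : ℕ → X := fun n => f^[n] x₀ with hxdef
  have hMC : MCauchy S.toIFMS x := by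
    intro ε hε t ht
    obtain ⟨n₁, h1⟩ := cauchy_mu S hψ hf x₀ hε ht
    obtain ⟨n₂, h2⟩ := cauchy_nu S hφ hf x₀ hε ht
    exact ⟨max n₁ n₂, fun m n hm hn =>
      ⟨h1 m n (le_trans (le_max_left _ _) hm) (le_trans (le_max_left _ _) hn),
       h2 m n (le_trans (le_max_right _ _) hm) (le_trans (le_max_right _ _) hn)⟩⟩
  obtain ⟨y, hy⟩ := hcompl x hMC
  refine ⟨y, hy, ?_⟩
  have hfx : ∀ k, f (x k) = x (k + 1) := fun k => (Function.iterate_succ_apply' f k x₀).symm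
  -- x (n+1) → f y  (μ side suffices)
  have key : ∀ t, 0 < t → Tendsto (fun n => S.mu (x (n + 1)) (f y) t) atTop (𝓝 1) := by
    intro t ht
    have hub : ∀ n, S.mu (x (n + 1)) (f y) t ≤ 1 := fun n => (S.mu_mem _ _ t ht).2
    have hlb : ∀ n, S.mu (x n) y t ≤ S.mu (x (n + 1)) (f y) t := by
      intro n
      have h := (hf (x n) y t ht).1 (S.mu_pos _ _ t ht)
      rw [hfx n] at h
      exact h.trans (psi_le hψ _ (S.mu_mem _ _ t ht))
    exact tendsto_of_tendsto_of_tendsto_of_le_of_le (hy t ht).1 tendsto_const_nhds hlb hub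
  have h1 : S.mu y (f y) 1 = 1 := by
    have ht : (0:ℝ) < 1 := one_pos
    have htri : ∀ n, S.tnorm (S.mu y (x (n + 1)) 1) (S.mu (x (n + 1)) (f y) 1) ≤
        S.mu y (f y) 1 := fun n => S.mu_na y (x (n + 1)) (f y) 1 ht
    have hyx : Tendsto (fun n => S.mu y (x (n + 1)) 1) atTop (𝓝 1) := by
      have := ((hy 1 ht).1).comp (tendsto_add_atTop_nat 1)
      refine this.congr fun n => ?_
      exact S.mu_symm _ _ 1 ht
    have hl : Tendsto (fun n => S.tnorm (S.mu y (x (n + 1)) 1) (S.mu (x (n + 1)) (f y) 1))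
        atTop (𝓝 (S.tnorm 1 1)) :=
      tnorm_tendsto S.toIFMS (fun n => S.mu_mem _ _ 1 ht) (fun n => S.mu_mem _ _ 1 ht)
        ⟨zero_le_one, le_rfl⟩ ⟨zero_le_one, le_rfl⟩ hyx (key 1 ht)
    rw [S.tnorm_one 1 ⟨zero_le_one, le_rfl⟩] at hl
    have hge : 1 ≤ S.mu y (f y) 1 := le_of_tendsto_of_tendsto' hl tendsto_const_nhds htri
    exact le_antisymm (S.mu_mem _ _ 1 ht).2 hge
  exact ((S.mu_eq_one_iff y (f y) 1 one_pos).mp h1).symm
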